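/- For any k-partition-with-sinks {P̂,Ŷ} with blocks P_p = {l_p,...,r_p} and sinks y_p (1 ≤ p ≤ k), the max-regret satisfies R_max({P̂,Ŷ}) = max over 1 ≤ p ≤ k of R_{l_p r_p}(y_p). -/
import Mathlib


/-- Maximum of `f` over a finite set of indices, with the empty maximum being `0`. -/
noncomputable def maxOver (S : Finset ℕ) (f : ℕ → ℝ) : ℝ := S.fold max 0 f

/-- Left evacuation time to sink `x t` of the subpath starting at `x l`, under weights `w`. -/
noncomputable def thetaL (x : ℕ → ℝ) (τ : ℝ) (w : ℕ → ℝ) (l t : ℕ) : ℝ :=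
  maxOver (Finset.Ico l t) (fun i => (x t - x i) * τ + ∑ j ∈ Finset.Icc l i, w j)

/-- Right evacuation time to sink `x t` of the subpath ending at `x r`, under weights `w`. -/
noncomputable def thetaR (x : ℕ → ℝ) (τ : ℝ) (w : ℕ → ℝ) (t r : ℕ) : ℝ :=
  maxOver (Finset.Ioc t r) (fun i => (x i - x t) * τ + ∑ j ∈ Finset.Icc i r, w j)

/-- 1-sink evacuation time `Θ¹([x_l,x_r], x_t, w)`. -/
noncomputable def theta1 (x : ℕ → ℝ) (τ : ℝ) (w : ℕ → ℝ) (l t r : ℕ) : ℝ :=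
  max (thetaL x τ w l t) (thetaR x τ w t r)

/-- A scenario assigns each vertex a weight within its bounds. -/
def IsScenario (n : ℕ) (wlo whi : ℕ → ℝ) (s : ℕ → ℝ) : Prop :=
  ∀ i, i ≤ n → wlo i ≤ s i ∧ s i ≤ whi i

/-- A `k`-partition-with-sinks of the vertex set `{0,…,n}` into `k` consecutive
nonempty blocks `{l p, …, r p}` (`p ∈ {1,…,k}`) with a sink `t p` in each block. -/
structure KPartSinks (n k : ℕ) where
  l : ℕ → ℕ
  r : ℕ → ℕ
  t : ℕ → ℕ
  first : l 1 = 0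
  last : r k = n
  consec : ∀ p, 1 ≤ p → p < k → l (p + 1) = r p + 1
  block_nonempty : ∀ p, 1 ≤ p → p ≤ k → l p ≤ r p
  sink_lb : ∀ p, 1 ≤ p → p ≤ k → l p ≤ t p
  sink_ub : ∀ p, 1 ≤ p → p ≤ k → t p ≤ r p

/-- `k`-sink evacuation time `Θᵏ(P, {P̂,Ŷ}, w)`. -/
noncomputable def thetaK {n k : ℕ} (x : ℕ → ℝ) (τ : ℝ) (PY : KPartSinks n k) (w : ℕ → ℝ) : ℝ :=
  maxOver (Finset.Icc 1 k) (fun p => theta1 x τ w (PY.l p) (PY.t p) (PY.r p))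

/-- Optimal `k`-sink evacuation time `Θᵏ_opt(P, w)`. -/
noncomputable def thetaOpt (x : ℕ → ℝ) (τ : ℝ) (n k : ℕ) (w : ℕ → ℝ) : ℝ :=
  sInf {v : ℝ | ∃ PY : KPartSinks n k, thetaK x τ PY w = v}

/-- Regret `R({P̂,Ŷ}, w)`. -/
noncomputable def regret {n k : ℕ} (x : ℕ → ℝ) (τ : ℝ) (PY : KPartSinks n k) (w : ℕ → ℝ) : ℝ :=
  thetaK x τ PY w - thetaOpt x τ n k w

/-- Max-regret `R_max({P̂,Ŷ})`. -/
noncomputable def maxRegret {n k : ℕ} (x : ℕ → ℝ) (τ : ℝ) (wlo whi : ℕ → ℝ)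
    (PY : KPartSinks n k) : ℝ :=
  sSup {v : ℝ | ∃ s : ℕ → ℝ, IsScenario n wlo whi s ∧ regret x τ PY s = v}

/-- A worst-case scenario: a scenario attaining the max-regret. -/
def IsWorstCase {n k : ℕ} (x : ℕ → ℝ) (τ : ℝ) (wlo whi : ℕ → ℝ) (PY : KPartSinks n k)
    (s : ℕ → ℝ) : Prop :=
  IsScenario n wlo whi s ∧ regret x τ PY s = maxRegret x τ wlo whi PY

/-- `d` is the index of the dominant part of `{P̂,Ŷ}` under weights `w`:
the smallest index attaining `max_p Θ¹(P_p, y_p, w)`. -/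
def IsDominant {n k : ℕ} (x : ℕ → ℝ) (τ : ℝ) (PY : KPartSinks n k) (w : ℕ → ℝ) (d : ℕ) : Prop :=
  1 ≤ d ∧ d ≤ k ∧
  (∀ p, 1 ≤ p → p ≤ k →
    theta1 x τ w (PY.l p) (PY.t p) (PY.r p) ≤ theta1 x τ w (PY.l d) (PY.t d) (PY.r d)) ∧
  (∀ p, 1 ≤ p → p < d →
    theta1 x τ w (PY.l p) (PY.t p) (PY.r p) < theta1 x τ w (PY.l d) (PY.t d) (PY.r d))

/-- `R_{lr}(x_t)`: the max-regret of the subpath `[x_l,x_r]` as assumed dominant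
part with sink `x_t`. -/
noncomputable def Rsink (x : ℕ → ℝ) (τ : ℝ) (wlo whi : ℕ → ℝ) (n k : ℕ) (l r t : ℕ) : ℝ :=
  sSup {v : ℝ | ∃ s : ℕ → ℝ, IsScenario n wlo whi s ∧
    theta1 x τ s l t r - thetaOpt x τ n k s = v}

/-- `R_{lr}`: the minimax regret of the subpath `[x_l,x_r]` as assumed dominant part. -/
noncomputable def Rlr (x : ℕ → ℝ) (τ : ℝ) (wlo whi : ℕ → ℝ) (n k : ℕ) (l r : ℕ) : ℝ :=
  sInf {v : ℝ | ∃ t, l ≤ t ∧ t ≤ r ∧ Rsink x τ wlo whi n k l r t = v}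

/-- A partition of `{0,…,i}` into `q` consecutive nonempty blocks `{l p, …, r p}`. -/
def IsQPartition (q i : ℕ) (l r : ℕ → ℕ) : Prop :=
  l 1 = 0 ∧ r q = i ∧ (∀ p, 1 ≤ p → p < q → l (p + 1) = r p + 1) ∧
  (∀ p, 1 ≤ p → p ≤ q → l p ≤ r p)

/-- `M(q, i)`: the minimum over partitions of `{0,…,i}` into `q` consecutive
nonempty blocks of `max_p R_{l_p r_p}`. -/
noncomputable def Mreg (x : ℕ → ℝ) (τ : ℝ) (wlo whi : ℕ → ℝ) (n k : ℕ) (q i : ℕ) : ℝ :=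
  sInf {v : ℝ | ∃ lf rf : ℕ → ℕ, IsQPartition q i lf rf ∧
    maxOver (Finset.Icc 1 q) (fun p => Rlr x τ wlo whi n k (lf p) (rf p)) = v}

/-- Left-dominant scenario on `{l,…,r}`. -/
def LeftDominant (wlo whi s : ℕ → ℝ) (l r : ℕ) : Prop :=
  ∃ i, l ≤ i ∧ i ≤ r + 1 ∧ (∀ j, l ≤ j → j < i → s j = whi j) ∧
    (∀ j, i ≤ j → j ≤ r → s j = wlo j)

/-- Right-dominant scenario on `{l,…,r}`. -/
def RightDominant (wlo whi s : ℕ → ℝ) (l r : ℕ) : Prop :=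
  ∃ i, l ≤ i ∧ i ≤ r + 1 ∧ (∀ j, l ≤ j → j < i → s j = wlo j) ∧
    (∀ j, i ≤ j → j ≤ r → s j = whi j)

lemma maxOver_le {S : Finset ℕ} {f : ℕ → ℝ} {c : ℝ} (h0 : 0 ≤ c)
    (h : ∀ a ∈ S, f a ≤ c) : maxOver S f ≤ c := by
  rw [maxOver, Finset.fold_max_le]; exact ⟨h0, h⟩

lemma le_maxOver {S : Finset ℕ} {f : ℕ → ℝ} {a : ℕ} (h : a ∈ S) : f a ≤ maxOver S f := by
  rw [maxOver, Finset.le_fold_max]; exact Or.inr ⟨a, h, le_rfl⟩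

lemma maxOver_nonneg (S : Finset ℕ) (f : ℕ → ℝ) : 0 ≤ maxOver S f := by
  rw [maxOver, Finset.le_fold_max]; exact Or.inl le_rfl

lemma maxOver_mono {S : Finset ℕ} {f g : ℕ → ℝ} (h : ∀ a ∈ S, f a ≤ g a) :
    maxOver S f ≤ maxOver S g :=
  maxOver_le (maxOver_nonneg _ _) (fun a ha => (h a ha).trans (le_maxOver ha))

lemma maxOver_attain {S : Finset ℕ} {f : ℕ → ℝ} (hS : S.Nonempty)
    (hf : ∀ a ∈ S, 0 ≤ f a) : ∃ a ∈ S, maxOver S f = f a := by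
  obtain ⟨a, ha, hsup⟩ := Finset.exists_mem_eq_sup' hS f
  refine ⟨a, ha, le_antisymm (maxOver_le (hf a ha) ?_) (le_maxOver ha)⟩
  intro b hb
  rw [← hsup]; exact Finset.le_sup' f hb

lemma theta1_nonneg (x : ℕ → ℝ) (τ : ℝ) (w : ℕ → ℝ) (l t r : ℕ) :
    0 ≤ theta1 x τ w l t r :=
  le_trans (maxOver_nonneg _ _) (le_max_left _ _)

lemma theta1_mono {n : ℕ} (x : ℕ → ℝ) (τ : ℝ) {w w' : ℕ → ℝ} {l t r : ℕ}
    (ht : t ≤ r) (hr : r ≤ n) (h : ∀ j, j ≤ n → w j ≤ w' j) :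
    theta1 x τ w l t r ≤ theta1 x τ w' l t r := by
  unfold theta1
  apply max_le_max
  · apply maxOver_mono
    intro i hi
    simp only [Finset.mem_Ico] at hi
    have : ∀ j ∈ Finset.Icc l i, w j ≤ w' j := by
      intro j hj
      simp only [Finset.mem_Icc] at hj
      exact h j (le_trans hj.2 (le_trans (Nat.le_of_lt_succ (Nat.lt_succ_of_lt hi.2))
        (le_trans ht hr)))
    linarith [Finset.sum_le_sum this]
  · apply maxOver_mono
    intro i hi
    simp only [Finset.mem_Ioc] at hi
    have : ∀ j ∈ Finset.Icc i r, w j ≤ w' j := by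
      intro j hj
      simp only [Finset.mem_Icc] at hj
      exact h j (le_trans hj.2 hr)
    linarith [Finset.sum_le_sum this]

lemma thetaK_nonneg {n k : ℕ} (x : ℕ → ℝ) (τ : ℝ) (PY : KPartSinks n k) (w : ℕ → ℝ) :
    0 ≤ thetaK x τ PY w := maxOver_nonneg _ _

lemma thetaOpt_nonneg {n k : ℕ} (x : ℕ → ℝ) (τ : ℝ) (PY : KPartSinks n k) (w : ℕ → ℝ) :
    0 ≤ thetaOpt x τ n k w := by
  have hne : {v : ℝ | ∃ PY' : KPartSinks n k, thetaK x τ PY' w = v}.Nonempty := ⟨_, PY, rfl⟩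
  apply le_csInf hne
  rintro v ⟨PY', rfl⟩
  exact thetaK_nonneg x τ PY' w

lemma thetaOpt_le {n k : ℕ} (x : ℕ → ℝ) (τ : ℝ) (PY : KPartSinks n k) (w : ℕ → ℝ) :
    thetaOpt x τ n k w ≤ thetaK x τ PY w := by
  have hmem : thetaK x τ PY w ∈ {v : ℝ | ∃ PY' : KPartSinks n k, thetaK x τ PY' w = v} :=
    ⟨PY, rfl⟩
  apply csInf_le ⟨0, ?_⟩ hmem
  rintro v ⟨PY', rfl⟩
  exact thetaK_nonneg x τ PY' w

lemma r_le_n {n k : ℕ} (PY : KPartSinks n k) :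
    ∀ p, 1 ≤ p → p ≤ k → PY.r p ≤ n := by
  have aux : ∀ m p, 1 ≤ p → p + m = k → PY.r p ≤ n := by
    intro m
    induction m with
    | zero => intro p hp hpk; simp at hpk; subst hpk; exact le_of_eq PY.last
    | succ m ih =>
      intro p hp hpk
      have hpk' : p < k := by omega
      have h1 : PY.l (p + 1) = PY.r p + 1 := PY.consec p hp hpk'
      have h2 : PY.l (p + 1) ≤ PY.r (p + 1) := PY.block_nonempty (p + 1) (by omega) (by omega)
      have h3 : PY.r (p + 1) ≤ n := ih (p + 1) (by omega) (by omega)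
      omega
  intro p hp hpk
  exact aux (k - p) p hp (by omega)

/-- the max-regret of a `k`-partition-with-sinks is the maximum
over its parts `p` of `R_{l_p r_p}(y_p)`. -/
theorem stmt_3 (n k : ℕ) (x : ℕ → ℝ) (τ : ℝ) (wlo whi : ℕ → ℝ)
    (hx : ∀ i, i < n → x i < x (i + 1)) (hτ : 0 < τ)
    (hw : ∀ i, i ≤ n → 0 < wlo i ∧ wlo i ≤ whi i) (hk : 1 ≤ k)
    (PY : KPartSinks n k) :
    maxRegret x τ wlo whi PY =
      maxOver (Finset.Icc 1 k)
        (fun p => Rsink x τ wlo whi n k (PY.l p) (PY.r p) (PY.t p)) := by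
  have hS : (Finset.Icc 1 k).Nonempty := Finset.nonempty_Icc.mpr hk
  have hscen_lo : IsScenario n wlo whi wlo := fun i hi => ⟨le_rfl, (hw i hi).2⟩
  set B := maxOver (Finset.Icc 1 k)
    (fun p => theta1 x τ whi (PY.l p) (PY.t p) (PY.r p)) with hB
  have hbound : ∀ s, IsScenario n wlo whi s → ∀ p ∈ Finset.Icc 1 k,
      theta1 x τ s (PY.l p) (PY.t p) (PY.r p) ≤ B := by
    intro s hs p hp
    simp only [Finset.mem_Icc] at hp
    refine le_trans (theta1_mono x τ (PY.sink_ub p hp.1 hp.2) (r_le_n PY p hp.1 hp.2)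
      (fun j hj => (hs j hj).2)) ?_
    exact le_maxOver (f := fun p => theta1 x τ whi (PY.l p) (PY.t p) (PY.r p))
      (Finset.mem_Icc.mpr hp)
  have hthetaK_le : ∀ s, IsScenario n wlo whi s → thetaK x τ PY s ≤ B := by
    intro s hs
    exact maxOver_le (maxOver_nonneg _ _) (hbound s hs)
  -- the regret set
  set A : Set ℝ := {v : ℝ | ∃ s : ℕ → ℝ, IsScenario n wlo whi s ∧ regret x τ PY s = v}
    with hA
  have hA_ne : A.Nonempty := ⟨regret x τ PY wlo, wlo, hscen_lo, rfl⟩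
  have hA_bdd : BddAbove A := by
    refine ⟨B, ?_⟩
    rintro v ⟨s, hs, rfl⟩
    have h1 := hthetaK_le s hs
    have h2 := thetaOpt_nonneg x τ PY s
    simp only [regret]
    linarith
  -- the Rsink sets
  have hRp_bdd : ∀ p ∈ Finset.Icc 1 k, BddAbove {v : ℝ | ∃ s : ℕ → ℝ,
      IsScenario n wlo whi s ∧
      theta1 x τ s (PY.l p) (PY.t p) (PY.r p) - thetaOpt x τ n k s = v} := by
    intro p hp
    refine ⟨B, ?_⟩
    rintro v ⟨s, hs, rfl⟩
    have h1 := hbound s hs p hp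
    have h2 := thetaOpt_nonneg x τ PY s
    linarith
  have hRp_ne : ∀ p, ({v : ℝ | ∃ s : ℕ → ℝ, IsScenario n wlo whi s ∧
      theta1 x τ s (PY.l p) (PY.t p) (PY.r p) - thetaOpt x τ n k s = v} : Set ℝ).Nonempty :=
    fun p => ⟨_, wlo, hscen_lo, rfl⟩
  have hmaxreg_nonneg : 0 ≤ maxRegret x τ wlo whi PY := by
    have h1 : regret x τ PY wlo ∈ A := ⟨wlo, hscen_lo, rfl⟩
    have h2 : 0 ≤ regret x τ PY wlo := by
      have := thetaOpt_le x τ PY wlo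
      simp only [regret]; linarith
    exact le_trans h2 (le_csSup hA_bdd h1)
  apply le_antisymm
  · -- maxRegret ≤ maxOver Rsink
    apply csSup_le hA_ne
    rintro v ⟨s, hs, rfl⟩
    obtain ⟨p, hp, hpeq⟩ := maxOver_attain hS
      (fun a _ => theta1_nonneg x τ s (PY.l a) (PY.t a) (PY.r a))
    have h1 : regret x τ PY s =
        theta1 x τ s (PY.l p) (PY.t p) (PY.r p) - thetaOpt x τ n k s := by
      simp only [regret, thetaK]; rw [hpeq]
    rw [h1]
    refine le_trans (le_csSup (hRp_bdd p hp) ⟨s, hs, rfl⟩) ?_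
    exact le_maxOver (f := fun p => Rsink x τ wlo whi n k (PY.l p) (PY.r p) (PY.t p)) hp
  · -- maxOver Rsink ≤ maxRegret
    apply maxOver_le hmaxreg_nonneg
    intro p hp
    apply csSup_le (hRp_ne p)
    rintro v ⟨s, hs, rfl⟩
    have h1 : theta1 x τ s (PY.l p) (PY.t p) (PY.r p) ≤ thetaK x τ PY s :=
      le_maxOver (f := fun p => theta1 x τ s (PY.l p) (PY.t p) (PY.r p)) hp
    have h2 : regret x τ PY s ∈ A := ⟨s, hs, rfl⟩
    have h3 := le_csSup hA_bdd h2
    simp only [regret] at h3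
    simp only [maxRegret] at *
    linarith
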